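/- arXiv:2207.08339 — 5 statements merged into one kernel-verified Lean document; each statement's English description precedes it below -/
import Mathlib

section
/- Let F be a finite field with q = |F| elements, V a finite-dimensional F-vector space, S a finite set, and δ : V → (S → F) a linear map. Let p ∈ [0,1). For f ∈ V and A ⊆ S define the Edwards–Sokal coupling weight κ(f, A) = ∏_{σ∈S} [(1−p)·1[σ∉A] + p·1[σ∈A]·1[(δf)(σ) = 0]]. Then for every A ⊆ S, Σ_{f∈V} κ(f, A) = p^{|A|} (1−p)^{|S|−|A|} · q^{d(A)}, where d(A) = dim_F {f ∈ V : (δf)(σ) = 0 for all σ ∈ A}. -/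
/-- Second marginal of the Edwards–Sokal coupling: for each plaquette set `A`,
`Σ_f κ(f,A) = p^{|A|}(1−p)^{|S|−|A|}·q^{d(A)}` where `q = |F|` and
`d(A) = dim {f : (δf)(σ) = 0 for all σ ∈ A}`. -/
theorem edwards_sokal_second_marginal
    (F V S : Type*) [Field F] [Fintype F] [DecidableEq F]
    [AddCommGroup V] [Module F V] [FiniteDimensional F V] [Fintype V]
    [Fintype S] [DecidableEq S]
    (δ : V →ₗ[F] (S → F)) (p : ℝ) (hp0 : 0 ≤ p) (hp1 : p < 1)
    (κ : V → Finset S → ℝ)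
    (hκ : ∀ (f : V) (A : Finset S), κ f A = ∏ σ : S,
      ((1 - p) * (if σ ∈ A then 0 else 1) +
        p * (if σ ∈ A then 1 else 0) * (if δ f σ = 0 then 1 else 0)))
    (W : Finset S → Submodule F V)
    (hW : ∀ (A : Finset S) (f : V), f ∈ W A ↔ ∀ σ ∈ A, δ f σ = 0)
    (d : Finset S → ℕ)
    (hd : ∀ A : Finset S, d A = Module.finrank F (W A))
    (A : Finset S) :
    ∑ f : V, κ f A =
      p ^ A.card * (1 - p) ^ (Fintype.card S - A.card) * (Fintype.card F : ℝ) ^ d A := by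
  classical
  have hκ' : ∀ f : V, κ f A =
      (if f ∈ W A then p ^ A.card * (1 - p) ^ (Fintype.card S - A.card) else 0) := by
    intro f
    rw [hκ f A, ← Finset.prod_mul_prod_compl A]
    have h1 : ∀ σ ∈ A, ((1 - p) * (if σ ∈ A then (0:ℝ) else 1) +
        p * (if σ ∈ A then 1 else 0) * (if δ f σ = 0 then 1 else 0)) =
        p * (if δ f σ = 0 then 1 else 0) := by
      intro σ hσ; simp [hσ]
    have h2 : ∀ σ ∈ Aᶜ, ((1 - p) * (if σ ∈ A then (0:ℝ) else 1) +
        p * (if σ ∈ A then 1 else 0) * (if δ f σ = 0 then 1 else 0)) = 1 - p := by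
      intro σ hσ; simp at hσ; simp [hσ]
    rw [Finset.prod_congr rfl h1, Finset.prod_congr rfl h2, Finset.prod_const,
      Finset.prod_mul_distrib, Finset.prod_const, Finset.prod_boole,
      Finset.card_compl]
    by_cases h : f ∈ W A
    · rw [if_pos ((hW A f).mp h)]
      simp only [if_pos h]; ring
    · rw [if_neg (fun hall => h ((hW A f).mpr hall)), if_neg h]
      ring
  rw [Finset.sum_congr rfl (fun f _ => hκ' f), Finset.sum_ite, Finset.sum_const,
    Finset.sum_const_zero, add_zero, nsmul_eq_mul]
  have hcard : ((Finset.univ.filter (fun f => f ∈ W A)).card : ℝ)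
      = (Fintype.card F : ℝ) ^ d A := by
    have h1 : (Finset.univ.filter (fun f => f ∈ W A)).card = Fintype.card (W A) :=
      (Fintype.card_subtype _).symm
    have h2 : Fintype.card (W A) = Fintype.card F ^ Module.finrank F (W A) :=
      Module.card_eq_pow_finrank
    rw [h1, h2, hd A]; push_cast; ring
  rw [hcard]; ring
end

section
/- Let F be a finite field with q = |F| elements, V a finite-dimensional F-vector space, S a finite set, and δ : V → (S → F) a linear map. Let β ≥ 0 and p = 1 − e^{−β}. Then Σ_{f∈V} e^{−β·|{σ∈S : (δf)(σ) ≠ 0}|} = Σ_{A⊆S} p^{|A|} (1−p)^{|S|−|A|} q^{d(A)}, where d(A) = dim_F {f ∈ V : (δf)(σ) = 0 for all σ ∈ A}. -/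
/-- Equality of total masses of the two marginals of the Edwards–Sokal coupling:
the Potts lattice gauge theory partition function equals the plaquette
random-cluster partition function,
`Σ_f e^{−β·#{σ : (δf)(σ)≠0}} = Σ_A p^{|A|}(1−p)^{|S|−|A|} q^{d(A)}`
with `p = 1 − e^{−β}`, `q = |F|`, `d(A) = dim {f : (δf)(σ)=0 for all σ ∈ A}`. -/
theorem potts_rcm_partition_functions
    (F V S : Type*) [Field F] [Fintype F] [DecidableEq F]
    [AddCommGroup V] [Module F V] [FiniteDimensional F V] [Fintype V]
    [Fintype S] [DecidableEq S]
    (δ : V →ₗ[F] (S → F)) (β : ℝ) (hβ : 0 ≤ β)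
    (p : ℝ) (hp : p = 1 - Real.exp (-β))
    (W : Finset S → Submodule F V)
    (hW : ∀ (A : Finset S) (f : V), f ∈ W A ↔ ∀ σ ∈ A, δ f σ = 0)
    (d : Finset S → ℕ)
    (hd : ∀ A : Finset S, d A = Module.finrank F (W A)) :
    ∑ f : V, Real.exp (-β * (Finset.univ.filter (fun σ : S => δ f σ ≠ 0)).card) =
      ∑ A : Finset S,
        p ^ A.card * (1 - p) ^ (Fintype.card S - A.card) * (Fintype.card F : ℝ) ^ d A := by
  classical
  have h1p : 1 - p = Real.exp (-β) := by rw [hp]; ring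
  -- per-f identity
  have key : ∀ f : V,
      Real.exp (-β * (Finset.univ.filter (fun σ : S => δ f σ ≠ 0)).card) =
      ∑ A : Finset S, (if f ∈ W A then
        p ^ A.card * (1 - p) ^ (Fintype.card S - A.card) else 0) := by
    intro f
    set Z : Finset S := Finset.univ.filter (fun σ : S => δ f σ = 0) with hZ
    have hmem : ∀ A : Finset S, f ∈ W A ↔ A ⊆ Z := by
      intro A
      rw [hW]
      constructor
      · intro h σ hσ; simp [hZ, h σ hσ]
      · intro h σ hσ; have := h hσ; simp [hZ, Finset.mem_filter] at this; exact this
    have hcard : (Finset.univ.filter (fun σ : S => δ f σ ≠ 0)).card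
        = Fintype.card S - Z.card := by
      rw [hZ]
      simp only [ne_eq, Finset.filter_not]
      rw [Finset.card_sdiff_of_subset (Finset.filter_subset _ _), Finset.card_univ]
    calc Real.exp (-β * (Finset.univ.filter (fun σ : S => δ f σ ≠ 0)).card)
        = (1 - p) ^ (Fintype.card S - Z.card) := by
          rw [hcard, h1p, ← Real.exp_nat_mul]
          ring_nf
      _ = (1 - p) ^ (Fintype.card S - Z.card) *
            ∑ A ∈ Z.powerset, p ^ A.card * (1 - p) ^ (Z.card - A.card) := by
          have hb : ∑ A ∈ Z.powerset, p ^ A.card * (1 - p) ^ (Z.card - A.card) = 1 := by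
            have hprod := (Finset.prod_add (fun _ : S => p) (fun _ : S => 1 - p) Z).symm
            simp only [Finset.prod_const] at hprod
            calc ∑ A ∈ Z.powerset, p ^ A.card * (1 - p) ^ (Z.card - A.card)
                = ∑ A ∈ Z.powerset, p ^ A.card * (1 - p) ^ (Z \ A).card := by
                  refine Finset.sum_congr rfl fun A hA => ?_
                  rw [Finset.card_sdiff_of_subset (Finset.mem_powerset.mp hA)]
              _ = (p + (1 - p)) ^ Z.card := hprod
              _ = 1 := by norm_num
          rw [hb, mul_one]
      _ = ∑ A ∈ Z.powerset, p ^ A.card * (1 - p) ^ (Fintype.card S - A.card) := by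
          rw [Finset.mul_sum]
          refine Finset.sum_congr rfl fun A hA => ?_
          have hAZ : A ⊆ Z := Finset.mem_powerset.mp hA
          have h1 : A.card ≤ Z.card := Finset.card_le_card hAZ
          have h2 : Z.card ≤ Fintype.card S := by
            simpa using Finset.card_le_card (Finset.subset_univ Z)
          have : Fintype.card S - A.card =
              (Fintype.card S - Z.card) + (Z.card - A.card) := by omega
          rw [this, pow_add]; ring
      _ = ∑ A : Finset S, (if f ∈ W A then
            p ^ A.card * (1 - p) ^ (Fintype.card S - A.card) else 0) := by
          rw [← Finset.sum_filter]
          congr 1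
          ext A
          simp [hmem, Finset.mem_powerset]
  rw [Finset.sum_congr rfl fun f _ => key f, Finset.sum_comm]
  refine Finset.sum_congr rfl fun A _ => ?_
  rw [← Finset.sum_filter, Finset.sum_const, nsmul_eq_mul, mul_comm]
  congr 1
  have : (Finset.univ.filter (fun f : V => f ∈ W A)).card = Fintype.card (W A) := by
    exact (Fintype.card_subtype _).symm
  rw [this]
  rw [hd A]
  exact_mod_cast (Module.card_eq_pow_finrank (K := F) (V := W A))
end

section
/- Let E be a finite set and b : Finset E → ℕ a function that is supermodular (b(A∪B) + b(A∩B) ≥ b(A) + b(B) for all A, B ⊆ E) and has unit decrements (b(A) − b(A∪{e}) ∈ {0,1} for all A ⊆ E and e ∈ E∖A). For p ∈ (0,1) and real q ≥ 1, let μ_{p,q} be the probability measure on subsets of E with μ_{p,q}(A) ∝ p^{|A|}(1−p)^{|E|−|A|} q^{b(A)}. Then for fixed p, μ_{p,q} is stochastically decreasing in q: for all 1 ≤ q₁ ≤ q₂ and every increasing event U ⊆ Finset E, μ_{p,q₂}(U) ≤ μ_{p,q₁}(U). -/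
/-- For fixed `p`, the random-cluster measure `μ_{p,q}(A) ∝ p^{|A|}(1−p)^{|E|−|A|} q^{b(A)}`
with supermodular `b` having unit decrements is stochastically decreasing in `q`:
for `1 ≤ q₁ ≤ q₂` and every increasing event `U`, `μ_{p,q₂}(U) ≤ μ_{p,q₁}(U)`. -/
theorem rcm_stochastically_decreasing_in_q
    (E : Type*) [Fintype E] [DecidableEq E]
    (p : ℝ) (hp0 : 0 < p) (hp1 : p < 1)
    (b : Finset E → ℕ)
    (hsuper : ∀ A B : Finset E, b A + b B ≤ b (A ∪ B) + b (A ∩ B))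
    (hdec : ∀ (A : Finset E) (e : E), e ∉ A →
      b (insert e A) = b A ∨ b (insert e A) + 1 = b A)
    (q₁ q₂ : ℝ) (hq1 : 1 ≤ q₁) (hq12 : q₁ ≤ q₂)
    (U : Finset (Finset E))
    (hU : ∀ A ∈ U, ∀ B : Finset E, A ⊆ B → B ∈ U) :
    (∑ A ∈ U, p ^ A.card * (1 - p) ^ (Fintype.card E - A.card) * q₂ ^ b A) /
        (∑ A : Finset E, p ^ A.card * (1 - p) ^ (Fintype.card E - A.card) * q₂ ^ b A) ≤
      (∑ A ∈ U, p ^ A.card * (1 - p) ^ (Fintype.card E - A.card) * q₁ ^ b A) /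
        (∑ A : Finset E, p ^ A.card * (1 - p) ^ (Fintype.card E - A.card) * q₁ ^ b A) := by
  have hq1pos : (0 : ℝ) < q₁ := lt_of_lt_of_le one_pos hq1
  have hq2pos : (0 : ℝ) < q₂ := lt_of_lt_of_le hq1pos hq12
  have hq2ge1 : (1 : ℝ) ≤ q₂ := le_trans hq1 hq12
  -- b is antitone
  have hanti : ∀ A B : Finset E, A ⊆ B → b B ≤ b A := by
    have key : ∀ (s A : Finset E), b (A ∪ s) ≤ b A := by
      intro s
      induction s using Finset.induction_on with
      | empty => intro A; simp
      | @insert e s he ih =>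
        intro A
        rw [Finset.union_insert]
        by_cases hm : e ∈ A ∪ s
        · rw [Finset.insert_eq_self.2 hm]; exact ih A
        · rcases hdec (A ∪ s) e hm with h | h
          · rw [h]; exact ih A
          · have := ih A; omega
    intro A B hAB
    have : A ∪ B = B := Finset.union_eq_right.2 hAB
    simpa [this] using key B A
  -- weights
  set w₁ : Finset E → ℝ :=
    fun A => p ^ A.card * (1 - p) ^ (Fintype.card E - A.card) * q₁ ^ b A with hw₁
  set w₂ : Finset E → ℝ :=
    fun A => p ^ A.card * (1 - p) ^ (Fintype.card E - A.card) * q₂ ^ b A with hw₂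
  have hw₁pos : ∀ A, 0 < w₁ A := fun A =>
    mul_pos (mul_pos (pow_pos hp0 _) (pow_pos (by linarith) _)) (pow_pos hq1pos _)
  have hw₂pos : ∀ A, 0 < w₂ A := fun A =>
    mul_pos (mul_pos (pow_pos hp0 _) (pow_pos (by linarith) _)) (pow_pos hq2pos _)
  -- the FKG lattice condition
  have hlat : ∀ s t : Finset E, w₂ s * w₁ t ≤ w₂ (s ∩ t) * w₁ (s ∪ t) := by
    intro s t
    have hcard : s.card + t.card = (s ∩ t).card + (s ∪ t).card := by
      have := Finset.card_union_add_card_inter s t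
      omega
    have hbst : b s ≤ b (s ∩ t) := hanti _ _ Finset.inter_subset_left
    have hbt : b (s ∪ t) ≤ b t := hanti _ _ Finset.subset_union_right
    have hsup : b s + b t ≤ b (s ∪ t) + b (s ∩ t) := hsuper s t
    -- q₂ ^ b s * q₁ ^ b t ≤ q₂ ^ b (s ∩ t) * q₁ ^ b (s ∪ t)
    have hq : q₂ ^ b s * q₁ ^ b t ≤ q₂ ^ b (s ∩ t) * q₁ ^ b (s ∪ t) := by
      obtain ⟨u, hu⟩ := Nat.exists_eq_add_of_le hbst
      obtain ⟨v, hv⟩ := Nat.exists_eq_add_of_le hbt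
      have hvu : v ≤ u := by omega
      rw [hu, hv, pow_add, pow_add]
      have h1 : q₁ ^ v ≤ q₂ ^ u :=
        le_trans (pow_le_pow_left₀ hq1pos.le hq12 v) (pow_le_pow_right₀ hq2ge1 hvu)
      calc q₂ ^ b s * (q₁ ^ b (s ∪ t) * q₁ ^ v)
          = (q₂ ^ b s * q₁ ^ b (s ∪ t)) * q₁ ^ v := by ring
        _ ≤ (q₂ ^ b s * q₁ ^ b (s ∪ t)) * q₂ ^ u := by
            apply mul_le_mul_of_nonneg_left h1
            positivity
        _ = q₂ ^ b s * q₂ ^ u * q₁ ^ b (s ∪ t) := by ring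
    have hpeq : p ^ s.card * (1 - p) ^ (Fintype.card E - s.card) *
        (p ^ t.card * (1 - p) ^ (Fintype.card E - t.card)) =
        p ^ (s ∩ t).card * (1 - p) ^ (Fintype.card E - (s ∩ t).card) *
        (p ^ (s ∪ t).card * (1 - p) ^ (Fintype.card E - (s ∪ t).card)) := by
      have hcs : s.card ≤ Fintype.card E := Finset.card_le_card (Finset.subset_univ s)
      have hct : t.card ≤ Fintype.card E := Finset.card_le_card (Finset.subset_univ t)
      have hcu : (s ∪ t).card ≤ Fintype.card E :=
        Finset.card_le_card (Finset.subset_univ _)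
      have hci : (s ∩ t).card ≤ Fintype.card E :=
        Finset.card_le_card (Finset.subset_univ _)
      rw [mul_mul_mul_comm, mul_mul_mul_comm (p ^ (s ∩ t).card), ← pow_add, ← pow_add,
        ← pow_add, ← pow_add]
      have e1 : s.card + t.card = (s ∩ t).card + (s ∪ t).card := hcard
      have e2 : (Fintype.card E - s.card) + (Fintype.card E - t.card)
          = (Fintype.card E - (s ∩ t).card) + (Fintype.card E - (s ∪ t).card) := by omega
      rw [e1, e2]
    simp only [hw₁, hw₂]
    calc p ^ s.card * (1 - p) ^ (Fintype.card E - s.card) * q₂ ^ b s *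
          (p ^ t.card * (1 - p) ^ (Fintype.card E - t.card) * q₁ ^ b t)
        = (p ^ s.card * (1 - p) ^ (Fintype.card E - s.card) *
            (p ^ t.card * (1 - p) ^ (Fintype.card E - t.card))) *
          (q₂ ^ b s * q₁ ^ b t) := by ring
      _ ≤ (p ^ (s ∩ t).card * (1 - p) ^ (Fintype.card E - (s ∩ t).card) *
            (p ^ (s ∪ t).card * (1 - p) ^ (Fintype.card E - (s ∪ t).card))) *
          (q₂ ^ b (s ∩ t) * q₁ ^ b (s ∪ t)) := by
          rw [hpeq]
          apply mul_le_mul_of_nonneg_left hq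
          have h1p : (0:ℝ) < 1 - p := by linarith
          positivity
      _ = p ^ (s ∩ t).card * (1 - p) ^ (Fintype.card E - (s ∩ t).card) * q₂ ^ b (s ∩ t) *
          (p ^ (s ∪ t).card * (1 - p) ^ (Fintype.card E - (s ∪ t).card) * q₁ ^ b (s ∪ t)) := by
          ring
  -- apply the four functions theorem
  have hmain : (∑ A ∈ U, w₂ A) * (∑ A : Finset E, w₁ A) ≤
      (∑ A : Finset E, w₂ A) * (∑ A ∈ U, w₁ A) := by
    have h4 := Finset.four_functions_theorem (f₁ := w₂) (f₂ := w₁) (f₃ := w₂) (f₄ := w₁)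
      (Finset.univ : Finset E)
      (fun A => (hw₂pos A).le) (fun A => (hw₁pos A).le)
      (fun A => (hw₂pos A).le) (fun A => (hw₁pos A).le)
      (fun s _ t _ => hlat s t)
      (𝒜 := U) (ℬ := (Finset.univ : Finset (Finset E)))
      (fun A _ => Finset.mem_powerset.2 (Finset.subset_univ A))
      (fun A _ => Finset.mem_powerset.2 (Finset.subset_univ A))
    refine le_trans h4 (mul_le_mul ?_ ?_ ?_ ?_)
    · exact Finset.sum_le_sum_of_subset_of_nonneg (Finset.subset_univ _)
        (fun A _ _ => (hw₂pos A).le)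
    · apply Finset.sum_le_sum_of_subset_of_nonneg
      · intro A hA
        rw [Finset.mem_sups] at hA
        obtain ⟨x, hx, y, _, rfl⟩ := hA
        exact hU x hx _ Finset.subset_union_left
      · exact fun A _ _ => (hw₁pos A).le
    · exact Finset.sum_nonneg fun A _ => (hw₁pos A).le
    · exact Finset.sum_nonneg fun A _ => (hw₂pos A).le
  have hZ₁ : 0 < ∑ A : Finset E, w₁ A :=
    Finset.sum_pos (fun A _ => hw₁pos A) Finset.univ_nonempty
  have hZ₂ : 0 < ∑ A : Finset E, w₂ A :=
    Finset.sum_pos (fun A _ => hw₂pos A) Finset.univ_nonempty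
  rw [div_le_div_iff₀ hZ₂ hZ₁]
  exact hmain.trans_eq (mul_comm _ _)
end

section
/- Let E be a finite set and b : Finset E → ℕ a function that is supermodular (b(A∪B) + b(A∩B) ≥ b(A) + b(B) for all A, B ⊆ E) and has unit decrements (b(A) − b(A∪{e}) ∈ {0,1} for all A ⊆ E and e ∈ E∖A). Fix p̂ ∈ (0,1), and for real q ≥ 1 set p(q) = q·p̂ / (1 + (q−1)·p̂), so that (p(q)/q) / (1 − p(q) + p(q)/q) = p̂. Let μ_{p,q} be the probability measure on subsets of E with μ_{p,q}(A) ∝ p^{|A|}(1−p)^{|E|−|A|} q^{b(A)}. Then μ_{p(q),q} is stochastically increasing in q: for all 1 ≤ q₁ ≤ q₂ and every increasing event U ⊆ Finset E, μ_{p(q₁),q₁}(U) ≤ μ_{p(q₂),q₂}(U). -/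
section Aux

variable {E : Type*} [Fintype E] [DecidableEq E]

/-- Monotonicity of `|A| + b A` from unit decrements. -/
lemma fb_mono (b : Finset E → ℕ)
    (hdec : ∀ (A : Finset E) (e : E), e ∉ A →
      b (insert e A) = b A ∨ b (insert e A) + 1 = b A) :
    Monotone (fun A : Finset E => A.card + b A) := by
  have hstep : ∀ (A : Finset E) (e : E),
      A.card + b A ≤ (insert e A).card + b (insert e A) := by
    intro A e
    by_cases he : e ∈ A
    · rw [Finset.insert_eq_self.2 he]
    · rw [Finset.card_insert_of_notMem he]
      rcases hdec A e he with h | h <;> omega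
  intro A B hAB
  classical
  have key : ∀ s A : Finset E, A.card + b A ≤ (A ∪ s).card + b (A ∪ s) := by
    intro s
    induction s using Finset.induction_on with
    | empty => intro A; simp
    | @insert a s ha ih =>
      intro A
      have h2 : A ∪ insert a s = insert a A ∪ s := by
        ext x; simp only [Finset.mem_union, Finset.mem_insert]; tauto
      rw [h2]
      exact le_trans (hstep A a) (ih (insert a A))
  have := key (B \ A) A
  rwa [Finset.union_sdiff_of_subset hAB] at this

end Aux

/-- Fixing `p̂ ∈ (0,1)` and setting `p(q) = q·p̂/(1+(q−1)·p̂)`, the random-cluster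
measure `μ_{p(q),q}(A) ∝ p(q)^{|A|}(1−p(q))^{|E|−|A|} q^{b(A)}` with supermodular `b`
having unit decrements is stochastically increasing in `q`: for `1 ≤ q₁ ≤ q₂` and
every increasing event `U`, `μ_{p(q₁),q₁}(U) ≤ μ_{p(q₂),q₂}(U)`. -/
theorem rcm_stochastically_increasing_in_q
    (E : Type*) [Fintype E] [DecidableEq E]
    (phat : ℝ) (hphat0 : 0 < phat) (hphat1 : phat < 1)
    (b : Finset E → ℕ)
    (hsuper : ∀ A B : Finset E, b A + b B ≤ b (A ∪ B) + b (A ∩ B))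
    (hdec : ∀ (A : Finset E) (e : E), e ∉ A →
      b (insert e A) = b A ∨ b (insert e A) + 1 = b A)
    (pfun : ℝ → ℝ)
    (hpfun : ∀ q : ℝ, pfun q = q * phat / (1 + (q - 1) * phat))
    (q₁ q₂ : ℝ) (hq1 : 1 ≤ q₁) (hq12 : q₁ ≤ q₂)
    (U : Finset (Finset E))
    (hU : ∀ A ∈ U, ∀ B : Finset E, A ⊆ B → B ∈ U) :
    (∑ A ∈ U, (pfun q₁) ^ A.card * (1 - pfun q₁) ^ (Fintype.card E - A.card) * q₁ ^ b A) /
        (∑ A : Finset E,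
          (pfun q₁) ^ A.card * (1 - pfun q₁) ^ (Fintype.card E - A.card) * q₁ ^ b A) ≤
      (∑ A ∈ U, (pfun q₂) ^ A.card * (1 - pfun q₂) ^ (Fintype.card E - A.card) * q₂ ^ b A) /
        (∑ A : Finset E,
          (pfun q₂) ^ A.card * (1 - pfun q₂) ^ (Fintype.card E - A.card) * q₂ ^ b A) := by
  classical
  set m := Fintype.card E with hm
  set r : ℝ := phat / (1 - phat) with hr
  have h1phat : 0 < 1 - phat := by linarith
  have hr0 : 0 < r := div_pos hphat0 h1phat
  have hq2 : (1:ℝ) ≤ q₂ := le_trans hq1 hq12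
  -- basic facts about pfun q for q ≥ 1
  have hbasic : ∀ q : ℝ, 1 ≤ q →
      (0 < 1 - pfun q) ∧ (pfun q = q * r * (1 - pfun q)) := by
    intro q hq
    have hD : (0:ℝ) < 1 + (q - 1) * phat := by nlinarith
    have h1p : 1 - pfun q = (1 - phat) / (1 + (q - 1) * phat) := by
      rw [hpfun q, eq_div_iff hD.ne', sub_mul, div_mul_cancel₀ _ hD.ne']; ring
    constructor
    · rw [h1p]; exact div_pos h1phat hD
    · rw [h1p, hpfun q, hr]; field_simp
  -- weight rewrite
  have hweight : ∀ q : ℝ, 1 ≤ q → ∀ A : Finset E,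
      pfun q ^ A.card * (1 - pfun q) ^ (m - A.card) * q ^ b A
        = (1 - pfun q) ^ m * (r ^ A.card * q ^ (A.card + b A)) := by
    intro q hq A
    obtain ⟨h1p, hpeq⟩ := hbasic q hq
    have hk : A.card ≤ m := by
      simpa [hm] using Finset.card_le_univ A
    have hp' : pfun q ^ A.card = (q * r) ^ A.card * (1 - pfun q) ^ A.card := by
      rw [← mul_pow, ← hpeq]
    calc pfun q ^ A.card * (1 - pfun q) ^ (m - A.card) * q ^ b A
        = (q * r) ^ A.card * ((1 - pfun q) ^ A.card * (1 - pfun q) ^ (m - A.card)) * q ^ b A := by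
          rw [hp']; ring
      _ = (q * r) ^ A.card * (1 - pfun q) ^ m * q ^ b A := by
          rw [← pow_add, Nat.add_sub_cancel' hk]
      _ = (1 - pfun q) ^ m * (r ^ A.card * q ^ (A.card + b A)) := by
          rw [mul_pow, pow_add]; ring
  obtain ⟨h1p₁, -⟩ := hbasic q₁ hq1
  obtain ⟨h1p₂, -⟩ := hbasic q₂ hq2
  -- the reduced weights
  set v₁ : Finset E → ℝ := fun A => r ^ A.card * q₁ ^ (A.card + b A) with hv₁
  set v₂ : Finset E → ℝ := fun A => r ^ A.card * q₂ ^ (A.card + b A) with hv₂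
  have hv₁pos : ∀ A : Finset E, 0 < v₁ A := fun A => by
    have : (0:ℝ) < q₁ := by linarith
    positivity
  have hv₂pos : ∀ A : Finset E, 0 < v₂ A := fun A => by
    have : (0:ℝ) < q₂ := by linarith
    positivity
  have hrw₁ : ∀ (s : Finset (Finset E)),
      (∑ A ∈ s, pfun q₁ ^ A.card * (1 - pfun q₁) ^ (m - A.card) * q₁ ^ b A)
        = (1 - pfun q₁) ^ m * ∑ A ∈ s, v₁ A := by
    intro s; rw [Finset.mul_sum]; exact Finset.sum_congr rfl fun A _ => hweight q₁ hq1 A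
  have hrw₂ : ∀ (s : Finset (Finset E)),
      (∑ A ∈ s, pfun q₂ ^ A.card * (1 - pfun q₂) ^ (m - A.card) * q₂ ^ b A)
        = (1 - pfun q₂) ^ m * ∑ A ∈ s, v₂ A := by
    intro s; rw [Finset.mul_sum]; exact Finset.sum_congr rfl fun A _ => hweight q₂ hq2 A
  rw [hrw₁ U, hrw₁ Finset.univ, hrw₂ U, hrw₂ Finset.univ,
    mul_div_mul_left _ _ (by positivity : ((1 - pfun q₁) ^ m : ℝ) ≠ 0),
    mul_div_mul_left _ _ (by positivity : ((1 - pfun q₂) ^ m : ℝ) ≠ 0)]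
  have hS₁ : (0:ℝ) < ∑ A : Finset E, v₁ A :=
    Finset.sum_pos (fun A _ => hv₁pos A) Finset.univ_nonempty
  have hS₂ : (0:ℝ) < ∑ A : Finset E, v₂ A :=
    Finset.sum_pos (fun A _ => hv₂pos A) Finset.univ_nonempty
  rw [div_le_div_iff₀ hS₁ hS₂]
  -- FKG step
  have hq₁pos : (0:ℝ) < q₁ := by linarith
  set t : ℝ := q₂ / q₁ with ht
  have ht1 : (1:ℝ) ≤ t := (one_le_div hq₁pos).2 hq12
  set F : Finset E → ℝ := fun A => if A ∈ U then 1 else 0 with hF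
  set G : Finset E → ℝ := fun A => t ^ (A.card + b A) with hG
  have hmono := fb_mono b hdec
  have hFmono : Monotone F := by
    intro A B hAB
    simp only [hF]
    by_cases hA : A ∈ U
    · rw [if_pos hA, if_pos (hU A hA B hAB)]
    · rw [if_neg hA]; positivity
  have hGmono : Monotone G := by
    intro A B hAB
    exact pow_le_pow_right₀ ht1 (hmono hAB)
  have hlattice : ∀ A B : Finset E, v₁ A * v₁ B ≤ v₁ (A ⊓ B) * v₁ (A ⊔ B) := by
    intro A B
    have hAB : (A ⊓ B) = A ∩ B := rfl
    have hAB' : (A ⊔ B) = A ∪ B := rfl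
    simp only [hv₁, hAB, hAB']
    have hcard := Finset.card_union_add_card_inter A B
    have hexp : A.card + b A + (B.card + b B)
        ≤ (A ∩ B).card + b (A ∩ B) + ((A ∪ B).card + b (A ∪ B)) := by
      have := hsuper A B; omega
    calc r ^ A.card * q₁ ^ (A.card + b A) * (r ^ B.card * q₁ ^ (B.card + b B))
        = r ^ (A.card + B.card) * q₁ ^ (A.card + b A + (B.card + b B)) := by
          rw [pow_add, pow_add]; ring
      _ ≤ r ^ (A.card + B.card)
            * q₁ ^ ((A ∩ B).card + b (A ∩ B) + ((A ∪ B).card + b (A ∪ B))) := by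
          exact mul_le_mul_of_nonneg_left (pow_le_pow_right₀ hq1 hexp) (by positivity)
      _ = r ^ ((A ∩ B).card + (A ∪ B).card)
            * q₁ ^ ((A ∩ B).card + b (A ∩ B) + ((A ∪ B).card + b (A ∪ B))) := by
          rw [show (A ∩ B).card + (A ∪ B).card = A.card + B.card by omega]
      _ = r ^ (A ∩ B).card * q₁ ^ ((A ∩ B).card + b (A ∩ B))
            * (r ^ (A ∪ B).card * q₁ ^ ((A ∪ B).card + b (A ∪ B))) := by
          rw [pow_add, pow_add]; ring
  have hfkg := fkg F G v₁ (fun A => (hv₁pos A).le)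
    (fun A => by simp only [hF]; positivity)
    (fun A => by simp only [hG]; positivity)
    hFmono hGmono hlattice
  -- identify the four sums
  have e₁ : (∑ A : Finset E, v₁ A * F A) = ∑ A ∈ U, v₁ A := by
    simp only [hF, mul_ite, mul_one, mul_zero]
    rw [Finset.sum_ite_mem, Finset.univ_inter]
  have hv₂v₁ : ∀ A : Finset E, v₁ A * G A = v₂ A := by
    intro A
    simp only [hv₁, hv₂, hG]
    rw [mul_assoc, ← mul_pow, show q₁ * t = q₂ by rw [ht]; field_simp]
  have e₂ : (∑ A : Finset E, v₁ A * G A) = ∑ A : Finset E, v₂ A :=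
    Finset.sum_congr rfl fun A _ => hv₂v₁ A
  have e₃ : (∑ A : Finset E, v₁ A * (F A * G A)) = ∑ A ∈ U, v₂ A := by
    have : ∀ A : Finset E, v₁ A * (F A * G A) = if A ∈ U then v₂ A else 0 := by
      intro A
      simp only [hF]
      by_cases hA : A ∈ U
      · rw [if_pos hA, if_pos hA, one_mul, hv₂v₁]
      · rw [if_neg hA, if_neg hA, zero_mul, mul_zero]
    rw [Finset.sum_congr rfl fun A _ => this A, Finset.sum_ite_mem, Finset.univ_inter]
  rw [e₁, e₂, e₃] at hfkg
  linarith [hfkg]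
end

section
/- Let E be a finite set and b : Finset E → ℕ a function that is supermodular (b(A∪B) + b(A∩B) ≥ b(A) + b(B) for all A, B ⊆ E) and has unit decrements (b(A) − b(A∪{e}) ∈ {0,1} for all A ⊆ E and e ∈ E∖A). Let E' ⊆ E. For p ∈ (0,1) and real q ≥ 1, let μ_E be the probability measure on subsets of E with μ_E(A) ∝ p^{|A|}(1−p)^{|E|−|A|} q^{b(A)}, and let μ_{E'} be the probability measure on subsets of E' with μ_{E'}(A) ∝ p^{|A|}(1−p)^{|E'|−|A|} q^{b(A)}. Then the pushforward of μ_E under the map A ↦ A ∩ E' stochastically dominates μ_{E'}: for every increasing event U ⊆ Finset E', Σ_{A⊆E : A∩E' ∈ U} μ_E(A) ≥ μ_{E'}(U). -/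
open Finset

/-- Decomposing a sum over all subsets of `E` as a double sum over subsets of `E'`
and subsets of its complement. -/
lemma sum_union_decomp {E : Type*} [Fintype E] [DecidableEq E] (E' : Finset E)
    (F : Finset E → ℝ) :
    ∑ S ∈ E'.powerset, ∑ B ∈ (univ \ E').powerset, F (S ∪ B) = ∑ A : Finset E, F A := by
  rw [← Finset.sum_product']
  refine Finset.sum_nbij' (fun x => x.1 ∪ x.2) (fun A => (A ∩ E', A \ E')) ?_ ?_ ?_ ?_ ?_
  · intro a _; exact mem_univ _
  · intro A _
    simp only [mem_product, mem_powerset]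
    exact ⟨inter_subset_right, sdiff_subset_sdiff (subset_univ _) le_rfl⟩
  · rintro ⟨S, B⟩ hx
    simp only [mem_product, mem_powerset] at hx
    obtain ⟨hS, hB⟩ := hx
    have hdisj : Disjoint B E' := by
      refine disjoint_left.2 fun a haB haE => ?_
      exact (mem_sdiff.1 (hB haB)).2 haE
    have h1 : (S ∪ B) ∩ E' = S := by
      rw [union_inter_distrib_right, inter_eq_left.2 hS,
        disjoint_iff_inter_eq_empty.1 hdisj, union_empty]
    have h2 : (S ∪ B) \ E' = B := by
      rw [union_sdiff_distrib, sdiff_eq_empty_iff_subset.2 hS, empty_union,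
        Finset.sdiff_eq_self_iff_disjoint.2 hdisj]
    simp [h1, h2]
  · intro A _
    simp only
    ext x
    simp only [mem_union, mem_inter, mem_sdiff]
    tauto
  · rintro ⟨S, B⟩ _; rfl

/-- The restriction to `E' ⊆ E` of the random-cluster model on `E` stochastically
dominates the random-cluster model on `E'`: for every increasing event `U` of subsets
of `E'`, `μ_E({A : A ∩ E' ∈ U}) ≥ μ_{E'}(U)`, where on each ground set the measure is
proportional to `p^{|A|}(1−p)^{#ground−|A|} q^{b(A)}` with `b` supermodular with unit
decrements. -/
theorem rcm_restriction_dominates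
    (E : Type*) [Fintype E] [DecidableEq E]
    (E' : Finset E)
    (p q : ℝ) (hp0 : 0 < p) (hp1 : p < 1) (hq : 1 ≤ q)
    (b : Finset E → ℕ)
    (hsuper : ∀ A B : Finset E, b A + b B ≤ b (A ∪ B) + b (A ∩ B))
    (hdec : ∀ (A : Finset E) (e : E), e ∉ A →
      b (insert e A) = b A ∨ b (insert e A) + 1 = b A)
    (U : Finset (Finset E))
    (hUsub : ∀ A ∈ U, A ⊆ E')
    (hU : ∀ A ∈ U, ∀ B ⊆ E', A ⊆ B → B ∈ U) :
    (∑ A ∈ U, p ^ A.card * (1 - p) ^ (E'.card - A.card) * q ^ b A) /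
        (∑ A ∈ E'.powerset, p ^ A.card * (1 - p) ^ (E'.card - A.card) * q ^ b A) ≤
      (∑ A ∈ Finset.univ.filter (fun A : Finset E => A ∩ E' ∈ U),
          p ^ A.card * (1 - p) ^ (Fintype.card E - A.card) * q ^ b A) /
        (∑ A : Finset E, p ^ A.card * (1 - p) ^ (Fintype.card E - A.card) * q ^ b A) := by
  classical
  have hp1' : 0 < 1 - p := by linarith
  have hq0 : 0 < q := lt_of_lt_of_le one_pos hq
  set v : Finset E → ℝ :=
    fun A => p ^ A.card * (1 - p) ^ (E'.card - A.card) * q ^ b A with hv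
  set w : Finset E → ℝ :=
    fun A => p ^ A.card * (1 - p) ^ (Fintype.card E - A.card) * q ^ b A with hw
  have hvpos : ∀ A, 0 < v A := fun A => by
    simp only [hv]; positivity
  have hwpos : ∀ A, 0 < w A := fun A => by
    simp only [hw]; positivity
  set Z' : ℝ := ∑ A ∈ E'.powerset, v A with hZ'
  set Z : ℝ := ∑ A : Finset E, w A with hZ
  have hZ'pos : 0 < Z' :=
    Finset.sum_pos (fun A _ => hvpos A) ⟨∅, mem_powerset.2 (empty_subset _)⟩
  have hZpos : 0 < Z := Finset.sum_pos (fun A _ => hwpos A) ⟨∅, mem_univ _⟩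
  set μ : Finset E → ℝ := fun A => if A ∩ E' ∈ U then 1 else 0 with hμ
  set f : Finset E → ℝ := fun A => if A ⊆ E' then v A / Z' else 0 with hf
  set g : Finset E → ℝ := fun A =>
    if A ⊆ E' then (∑ B ∈ (univ \ E').powerset, w (A ∪ B)) / Z else 0 with hg
  -- nonnegativity
  have hf0 : (0 : Finset E → ℝ) ≤ f := by
    intro A; simp only [hf, Pi.zero_apply]
    split
    · exact le_of_lt (div_pos (hvpos A) hZ'pos)
    · exact le_rfl
  have hg0 : (0 : Finset E → ℝ) ≤ g := by
    intro A; simp only [hg, Pi.zero_apply]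
    split
    · exact div_nonneg (Finset.sum_nonneg fun B _ => (hwpos _).le) hZpos.le
    · exact le_rfl
  have hμ0 : (0 : Finset E → ℝ) ≤ μ := by
    intro A; simp only [hμ, Pi.zero_apply]
    split <;> norm_num
  -- monotonicity of μ
  have hμmono : Monotone μ := by
    intro A B hAB
    simp only [hμ]
    split_ifs with h1 h2 h2
    · exact le_rfl
    · exact absurd (hU _ h1 (B ∩ E') inter_subset_right
        (inter_subset_inter hAB le_rfl)) h2
    · norm_num
    · exact le_rfl
  -- helper: disjointness facts for B ⊆ univ \ E'
  have hBnot : ∀ {B : Finset E}, B ⊆ univ \ E' → ∀ {x}, x ∈ B → x ∉ E' := by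
    intro B hB x hx
    exact (mem_sdiff.1 (hB hx)).2
  have hinter : ∀ {A B : Finset E}, A ⊆ E' → B ⊆ univ \ E' → (A ∪ B) ∩ E' = A := by
    intro A B hA hB
    ext x
    simp only [mem_inter, mem_union]
    constructor
    · rintro ⟨hx1 | hx1, hx2⟩
      · exact hx1
      · exact absurd hx2 (hBnot hB hx1)
    · intro hx; exact ⟨Or.inl hx, hA hx⟩
  -- total masses are equal (both 1)
  have hfsum : ∑ A : Finset E, f A = 1 := by
    have e1 : E'.powerset = univ.filter (· ⊆ E') := by
      ext A; simp [mem_powerset]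
    have : ∑ A : Finset E, f A = ∑ A ∈ E'.powerset, v A / Z' := by
      rw [e1, Finset.sum_filter]
    rw [this, ← Finset.sum_div, ← hZ', div_self hZ'pos.ne']
  have hgsum : ∑ A : Finset E, g A = 1 := by
    have e1 : E'.powerset = univ.filter (· ⊆ E') := by
      ext A; simp [mem_powerset]
    have e2 : ∑ A : Finset E, g A
        = ∑ A ∈ E'.powerset, (∑ B ∈ (univ \ E').powerset, w (A ∪ B)) / Z := by
      rw [e1, Finset.sum_filter]
    rw [e2, ← Finset.sum_div]
    rw [sum_union_decomp E' w, ← hZ, div_self hZpos.ne']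
  have hfg : ∑ A : Finset E, f A = ∑ A : Finset E, g A := by rw [hfsum, hgsum]
  -- the Holley lattice condition
  have hlat : ∀ a c : Finset E, f a * g c ≤ f (a ⊓ c) * g (a ⊔ c) := by
    intro a c
    by_cases ha : a ⊆ E'
    · by_cases hc : c ⊆ E'
      · have hac1 : a ∩ c ⊆ E' := fun x hx => ha (mem_inter.1 hx).1
        have hac2 : a ∪ c ⊆ E' := union_subset ha hc
        simp only [hf, hg, inf_eq_inter, sup_eq_union, if_pos ha, if_pos hc,
          if_pos hac1, if_pos hac2]
        rw [div_mul_div_comm, div_mul_div_comm]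
        rw [div_le_div_iff_of_pos_right (mul_pos hZ'pos hZpos)]
        rw [Finset.mul_sum, Finset.mul_sum]
        refine Finset.sum_le_sum fun B hB => ?_
        have hBs : B ⊆ univ \ E' := mem_powerset.1 hB
        have hdc : Disjoint c B :=
          disjoint_right.2 fun x hxB hxc => hBnot hBs hxB (hc hxc)
        have hdac : Disjoint (a ∪ c) B :=
          disjoint_right.2 fun x hxB hxU => hBnot hBs hxB (hac2 hxU)
        have card1 : (c ∪ B).card = c.card + B.card := card_union_of_disjoint hdc
        have card2 : ((a ∪ c) ∪ B).card = (a ∪ c).card + B.card :=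
          card_union_of_disjoint hdac
        have card3 : (a ∩ c).card + (a ∪ c).card = a.card + c.card :=
          card_inter_add_card_union a c
        have hma : a.card ≤ E'.card := card_le_card ha
        have hmac : (a ∩ c).card ≤ E'.card := card_le_card hac1
        have hn1 : (c ∪ B).card ≤ Fintype.card E := card_le_univ _
        have hn2 : ((a ∪ c) ∪ B).card ≤ Fintype.card E := card_le_univ _
        have hbineq : b a + b (c ∪ B) ≤ b (a ∩ c) + b ((a ∪ c) ∪ B) := by
          have h1 := hsuper a (c ∪ B)
          have e1 : a ∪ (c ∪ B) = (a ∪ c) ∪ B := (union_assoc a c B).symm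
          have e2 : a ∩ (c ∪ B) = a ∩ c := by
            ext x
            simp only [mem_inter, mem_union]
            constructor
            · rintro ⟨hxa, hx | hx⟩
              · exact ⟨hxa, hx⟩
              · exact absurd (ha hxa) (hBnot hBs hx)
            · rintro ⟨hxa, hxc⟩; exact ⟨hxa, Or.inl hxc⟩
          rw [e1, e2] at h1
          omega
        simp only [hv, hw]
        have form : ∀ s t u s' t' u' : ℕ,
            (p ^ s * (1 - p) ^ t * q ^ u) * (p ^ s' * (1 - p) ^ t' * q ^ u')
              = p ^ (s + s') * (1 - p) ^ (t + t') * q ^ (u + u') := by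
          intros; rw [pow_add, pow_add, pow_add]; ring
        rw [form, form]
        have eS : a.card + (c ∪ B).card = (a ∩ c).card + ((a ∪ c) ∪ B).card := by omega
        have eT : (E'.card - a.card) + (Fintype.card E - (c ∪ B).card)
            = (E'.card - (a ∩ c).card) + (Fintype.card E - ((a ∪ c) ∪ B).card) := by
          omega
        rw [eS, eT]
        have hqpow : q ^ (b a + b (c ∪ B)) ≤ q ^ (b (a ∩ c) + b ((a ∪ c) ∪ B)) :=
          pow_le_pow_right₀ hq hbineq
        exact mul_le_mul_of_nonneg_left hqpow (by positivity)
      · simp only [hg, if_neg hc]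
        rw [mul_zero]
        exact mul_nonneg (hf0 _) (hg0 _)
    · simp only [hf, if_neg ha]
      rw [zero_mul]
      exact mul_nonneg (hf0 _) (hg0 _)
  -- Holley's inequality
  have main := holley f g μ hμ0 hf0 hg0 hμmono hfg hlat
  -- identify the two sides
  have L : ∑ A : Finset E, μ A * f A = (∑ A ∈ U, v A) / Z' := by
    have e1 : ∀ A : Finset E, μ A * f A = if A ∈ U then v A / Z' else 0 := by
      intro A
      by_cases hA : A ∈ U
      · have hAs : A ⊆ E' := hUsub A hA
        have : A ∩ E' = A := inter_eq_left.2 hAs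
        simp only [hμ, hf, this, if_pos hA, if_pos hAs, one_mul]
      · by_cases hAs : A ⊆ E'
        · have : A ∩ E' = A := inter_eq_left.2 hAs
          simp only [hμ, hf, this, if_neg hA, zero_mul]
        · simp only [hf, if_neg hAs, mul_zero, if_neg hA]
    have e2 : univ.filter (· ∈ U) = U := by
      ext A; simp
    calc ∑ A : Finset E, μ A * f A = ∑ A : Finset E, if A ∈ U then v A / Z' else 0 := by
          exact Finset.sum_congr rfl fun A _ => e1 A
      _ = ∑ A ∈ univ.filter (· ∈ U), v A / Z' := (Finset.sum_filter _ _).symm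
      _ = ∑ A ∈ U, v A / Z' := by rw [e2]
      _ = (∑ A ∈ U, v A) / Z' := by rw [Finset.sum_div]
  have R : ∑ A : Finset E, μ A * g A
      = (∑ A ∈ univ.filter (fun A : Finset E => A ∩ E' ∈ U), w A) / Z := by
    have e0 : ∑ A : Finset E, μ A * g A = ∑ A ∈ E'.powerset, μ A * g A := by
      refine (Finset.sum_subset (subset_univ _) ?_).symm
      intro A _ hA
      have : ¬ A ⊆ E' := fun h => hA (mem_powerset.2 h)
      simp only [hg, if_neg this, mul_zero]
    have e1 : ∀ A ∈ E'.powerset, μ A * g A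
        = (∑ B ∈ (univ \ E').powerset,
            if (A ∪ B) ∩ E' ∈ U then w (A ∪ B) else 0) / Z := by
      intro A hA
      have hAs : A ⊆ E' := mem_powerset.1 hA
      have hAE : A ∩ E' = A := inter_eq_left.2 hAs
      have e2 : ∀ B ∈ (univ \ E').powerset,
          (if (A ∪ B) ∩ E' ∈ U then w (A ∪ B) else 0)
            = if A ∈ U then w (A ∪ B) else 0 := by
        intro B hB
        rw [hinter hAs (mem_powerset.1 hB)]
      rw [Finset.sum_congr rfl e2]
      by_cases hAU : A ∈ U
      · simp only [hμ, hg, hAE, if_pos hAU, if_pos hAs, one_mul]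
      · simp only [hμ, hg, hAE, if_neg hAU, zero_mul, Finset.sum_const_zero, zero_div]
    rw [e0, Finset.sum_congr rfl e1, ← Finset.sum_div]
    congr 1
    rw [show (∑ A ∈ E'.powerset, ∑ B ∈ (univ \ E').powerset,
          if (A ∪ B) ∩ E' ∈ U then w (A ∪ B) else 0)
        = ∑ A : Finset E, if A ∩ E' ∈ U then w A else 0 from
      sum_union_decomp E' (fun X => if X ∩ E' ∈ U then w X else 0)]
    rw [← Finset.sum_filter]
  rw [L, R] at main
  exact main
end
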